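/- Let A be a real symmetric matrix indexed by a finite vertex set V, let G be the graph whose edges are pairs {i,j}, i ≠ j, with A_{ij} ≠ 0. Suppose v has graph distance n from u in G and (A^n δ_u)_v ≠ 0 (the generic case). Then lim_{t → 0⁺} log((u_t)_v) / log t = n, where u_t = (I - tA)^{-1} δ_u for small t > 0. -/

import Mathlib

open Filter Topology

lemma walk_of_pow_ne_zero {V : Type*} [Fintype V] [DecidableEq V]
    (A : Matrix V V ℝ) (G : SimpleGraph V)
    (hG : ∀ i j, G.Adj i j ↔ i ≠ j ∧ A i j ≠ 0) :
    ∀ (k : ℕ) (i j : V), (A ^ k) i j ≠ 0 → ∃ p : G.Walk i j, p.length ≤ k := by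
  intro k
  induction k with
  | zero =>
    intro i j h
    rw [pow_zero] at h
    by_cases hij : i = j
    · subst hij; exact ⟨SimpleGraph.Walk.nil, le_refl 0⟩
    · simp [Matrix.one_apply, hij] at h
  | succ k ih =>
    intro i j h
    rw [pow_succ', Matrix.mul_apply] at h
    obtain ⟨l, -, hl⟩ := Finset.exists_ne_zero_of_sum_ne_zero h
    have h1 : A i l ≠ 0 := left_ne_zero_of_mul hl
    have h2 : (A ^ k) l j ≠ 0 := right_ne_zero_of_mul hl
    obtain ⟨p, hp⟩ := ih l j h2
    by_cases hil : i = l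
    · subst hil; exact ⟨p, hp.trans (Nat.le_succ k)⟩
    · exact ⟨SimpleGraph.Walk.cons ((hG i l).mpr ⟨hil, h1⟩) p,
        by simpa using Nat.succ_le_succ hp⟩

lemma pow_entry_bound {V : Type*} [Fintype V] [DecidableEq V] (A : Matrix V V ℝ) :
    ∃ r : ℝ, 1 ≤ r ∧ ∀ (k : ℕ) (i j : V), |(A ^ k) i j| ≤ r ^ k := by
  refine ⟨(∑ i, ∑ j, |A i j|) + 1, le_add_of_nonneg_left (by positivity), ?_⟩
  set r : ℝ := (∑ i, ∑ j, |A i j|) + 1 with hr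
  have hrow : ∀ i : V, (∑ l, |A i l|) ≤ r := by
    intro i
    have h1 : (∑ l, |A i l|) ≤ ∑ i, ∑ j, |A i j| :=
      Finset.single_le_sum (f := fun i => ∑ j, |A i j|)
        (fun i _ => by positivity) (Finset.mem_univ i)
    linarith
  intro k
  induction k with
  | zero =>
    intro i j
    rw [pow_zero, pow_zero, Matrix.one_apply]
    split_ifs <;> simp
  | succ k ih =>
    intro i j
    rw [pow_succ', Matrix.mul_apply]
    calc |∑ l, A i l * (A ^ k) l j| ≤ ∑ l, |A i l * (A ^ k) l j| :=
          Finset.abs_sum_le_sum_abs _ _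
      _ ≤ ∑ l, |A i l| * r ^ k := by
          refine Finset.sum_le_sum fun l _ => ?_
          rw [abs_mul]
          exact mul_le_mul_of_nonneg_left (ih l j) (abs_nonneg _)
      _ = (∑ l, |A i l|) * r ^ k := by rw [Finset.sum_mul]
      _ ≤ r * r ^ k := by
          have : (0:ℝ) ≤ r ^ k := pow_nonneg (by positivity) k
          exact mul_le_mul_of_nonneg_right (hrow i) this
      _ = r ^ (k + 1) := (pow_succ' r k).symm

section NeumannAux

attribute [local instance] Matrix.linftyOpNormedAddCommGroup Matrix.linftyOpNormedRing
  Matrix.linftyOpNormedAlgebra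

set_option maxHeartbeats 1000000 in
lemma neumann_entry_exists {V : Type*} [Fintype V] [DecidableEq V] (A : Matrix V V ℝ) :
    ∃ ε : ℝ, 0 < ε ∧ ∀ t : ℝ, 0 < t → t < ε → ∀ i j,
      HasSum (fun n : ℕ => t ^ n * (A ^ n) i j) ((1 - t • A)⁻¹ i j) := by
  have hA0 : (0:ℝ) ≤ ‖A‖ := norm_nonneg _
  have hpos : (0:ℝ) < ‖A‖ + 1 := by positivity
  refine ⟨(‖A‖ + 1)⁻¹, by positivity, ?_⟩
  intro t ht htε i j
  have htA : ‖t • A‖ < 1 := by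
    rw [norm_smul, Real.norm_eq_abs, abs_of_pos ht]
    have h2 : t * (‖A‖ + 1) < 1 := by
      have := mul_lt_mul_of_pos_right htε hpos
      rwa [inv_mul_cancel₀ (ne_of_gt hpos)] at this
    nlinarith
  have hsummable := summable_geometric_of_norm_lt_one htA
  have hinv : (1 - t • A)⁻¹ = ∑' n : ℕ, (t • A) ^ n :=
    Matrix.inv_eq_left_inv (geom_series_mul_neg _ htA)
  have hS : HasSum (fun n : ℕ => (t • A) ^ n) ((1 - t • A)⁻¹) := hinv ▸ hsummable.hasSum
  have hS1 : HasSum (fun n : ℕ => ((t • A) ^ n : Matrix V V ℝ) i) ((1 - t • A)⁻¹ i) :=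
    Pi.hasSum.mp hS i
  have hS2 : HasSum (fun n : ℕ => ((t • A) ^ n : Matrix V V ℝ) i j) ((1 - t • A)⁻¹ i j) :=
    Pi.hasSum.mp hS1 j
  refine hS2.congr_fun fun n => ?_
  rw [smul_pow, Matrix.smul_apply, smul_eq_mul]

end NeumannAux

/-- Varadhan formula for graphs: if `G` is the sparsity graph of a real symmetric matrix `A`,
`v` has graph distance `N` from `u`, and generically `(A^N δ_u)_v ≠ 0`, then
`log((u_t)_v)/log t → N` as `t → 0⁺`, where `u_t = (I - tA)⁻¹ δ_u`. -/
theorem stmt3 (V : Type*) [Fintype V] [DecidableEq V]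
    (A : Matrix V V ℝ) (hA : A.IsSymm)
    (G : SimpleGraph V) (hG : ∀ i j, G.Adj i j ↔ i ≠ j ∧ A i j ≠ 0)
    (u v : V) (N : ℕ) (hreach : G.Reachable u v) (hdist : G.dist u v = N)
    (hgen : ((A ^ N).mulVec (Pi.single u 1)) v ≠ 0) :
    Tendsto (fun t : ℝ => Real.log (((1 - t • A)⁻¹.mulVec (Pi.single u 1)) v) / Real.log t)
      (𝓝[>] 0) (𝓝 (N : ℝ)) := by
  obtain ⟨r, hr1, hrb⟩ := pow_entry_bound A
  have hr0 : (0:ℝ) < r := lt_of_lt_of_le one_pos hr1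
  obtain ⟨ε₀, hε₀, hkey⟩ := neumann_entry_exists A
  set c : ℕ → ℝ := fun k => (A ^ k) v u with hc
  have hc0 : ∀ k < N, c k = 0 := by
    intro k hk
    by_contra hne
    obtain ⟨p, hp⟩ := walk_of_pow_ne_zero A G hG k v u hne
    have : G.dist u v ≤ k := by
      rw [SimpleGraph.dist_comm]
      exact (SimpleGraph.dist_le p).trans hp
    omega
  have hcN : c N ≠ 0 := by
    simpa [hc, Matrix.mulVec_single] using hgen
  set f : ℝ → ℝ := fun t => ((1 - t • A)⁻¹.mulVec (Pi.single u 1)) v with hf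
  set g : ℝ → ℝ := fun t => f t / t ^ N with hgdef
  set ε : ℝ := min ε₀ (2 * r)⁻¹ with hε
  have hεpos : 0 < ε := lt_min hε₀ (by positivity)
  -- key has-sum statement
  have key : ∀ t : ℝ, 0 < t → t < ε → HasSum (fun n => t ^ n * c (N + n)) (g t) := by
    intro t ht htε
    have ht0 : t ≠ 0 := ne_of_gt ht
    have hentry : HasSum (fun n : ℕ => t ^ n * c n) (f t) := by
      have h := hkey t ht (lt_of_lt_of_le htε (min_le_left _ _)) v u
      have hE : (1 - t • A)⁻¹ v u = f t := by
        simp [hf, Matrix.mulVec_single]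
      rwa [hE] at h
    have h1 : HasSum (fun n : ℕ => t ^ (n + N) * c (n + N))
        (f t - ∑ i ∈ Finset.range N, t ^ i * c i) :=
      (hasSum_nat_add_iff' N).mpr hentry
    have hzero : (∑ i ∈ Finset.range N, t ^ i * c i) = 0 := by
      apply Finset.sum_eq_zero
      intro i hi
      rw [hc0 i (Finset.mem_range.mp hi), mul_zero]
    rw [hzero, sub_zero] at h1
    have h2 := h1.mul_left ((t ^ N)⁻¹)
    have hfun : (fun n : ℕ => (t ^ N)⁻¹ * (t ^ (n + N) * c (n + N)))
        = fun n : ℕ => t ^ n * c (N + n) := by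
      funext n
      rw [pow_add, Nat.add_comm n N]
      field_simp
    rw [hfun] at h2
    rw [inv_mul_eq_div] at h2
    exact h2
  -- g tends to c N
  have hgbound : ∀ᶠ t in 𝓝[>] (0:ℝ), ‖g t - c N‖ ≤ 2 * r ^ (N + 1) * t := by
    filter_upwards [Ioo_mem_nhdsGT hεpos] with t ht
    obtain ⟨ht0, htε⟩ := ht
    have htr : t * r < 1 / 2 := by
      have h1 : t < (2 * r)⁻¹ := lt_of_lt_of_le htε (min_le_right _ _)
      calc t * r < (2 * r)⁻¹ * r := mul_lt_mul_of_pos_right h1 hr0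
        _ = 1 / 2 := by
            rw [mul_inv, mul_assoc, inv_mul_cancel₀ (ne_of_gt hr0), mul_one, one_div]
    have h3 := key t ht0 htε
    have h4 : HasSum (fun n : ℕ => t ^ (n + 1) * c (N + (n + 1)))
        (g t - ∑ i ∈ Finset.range 1, t ^ i * c (N + i)) :=
      (hasSum_nat_add_iff' 1).mpr h3
    rw [Finset.sum_range_one] at h4
    simp only [pow_zero, one_mul, Nat.add_zero] at h4
    have hge : HasSum (fun n : ℕ => t * r ^ (N + 1) * (t * r) ^ n)
        (t * r ^ (N + 1) * (1 - t * r)⁻¹) :=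
      (hasSum_geometric_of_lt_one (by positivity) (by linarith)).mul_left _
    have hptwise : ∀ n : ℕ, |t ^ (n + 1) * c (N + (n + 1))| ≤ t * r ^ (N + 1) * (t * r) ^ n := by
      intro n
      calc |t ^ (n + 1) * c (N + (n + 1))| = t ^ (n + 1) * |c (N + (n + 1))| := by
            rw [abs_mul, abs_of_nonneg (by positivity)]
        _ ≤ t ^ (n + 1) * r ^ (N + (n + 1)) :=
            mul_le_mul_of_nonneg_left (hrb _ v u) (by positivity)
        _ = t * r ^ (N + 1) * (t * r) ^ n := by
            rw [mul_pow, pow_add, pow_add]; ring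
    have hle1 : g t - c N ≤ t * r ^ (N + 1) * (1 - t * r)⁻¹ :=
      hasSum_le (fun n => (le_abs_self _).trans (hptwise n)) h4 hge
    have hle2 : -(g t - c N) ≤ t * r ^ (N + 1) * (1 - t * r)⁻¹ :=
      hasSum_le (fun n => (neg_le_abs _).trans (hptwise n)) h4.neg hge
    have habs : |g t - c N| ≤ t * r ^ (N + 1) * (1 - t * r)⁻¹ := abs_le.mpr ⟨by linarith, hle1⟩
    have hfin : t * r ^ (N + 1) * (1 - t * r)⁻¹ ≤ 2 * r ^ (N + 1) * t := by
      have h5 : (1 - t * r)⁻¹ ≤ 2 := by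
        rw [inv_le_comm₀ (by linarith) (by norm_num)]
        linarith
      have h6 : (0:ℝ) ≤ t * r ^ (N + 1) := by positivity
      nlinarith [pow_nonneg (le_of_lt hr0) (N + 1)]
    rw [Real.norm_eq_abs]
    linarith
  have hgtend : Tendsto g (𝓝[>] (0:ℝ)) (𝓝 (c N)) := by
    have h0 : Tendsto (fun t : ℝ => g t - c N) (𝓝[>] (0:ℝ)) (𝓝 0) := by
      apply squeeze_zero_norm' hgbound
      have : Tendsto (fun t : ℝ => 2 * r ^ (N + 1) * t) (𝓝[>] (0:ℝ)) (𝓝 (2 * r ^ (N + 1) * 0)) :=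
        (tendsto_id.const_mul _).mono_left nhdsWithin_le_nhds
      simpa using this
    have := h0.add_const (c N)
    simpa using this
  have hgne : ∀ᶠ t in 𝓝[>] (0:ℝ), g t ≠ 0 := hgtend.eventually_ne hcN
  -- eventual equality of the target with N + log (g t) / log t
  have heq : ∀ᶠ t in 𝓝[>] (0:ℝ),
      Real.log (f t) / Real.log t = (N:ℝ) + Real.log (g t) / Real.log t := by
    filter_upwards [Ioo_mem_nhdsGT (lt_min hεpos one_pos), hgne] with t ht hgt
    obtain ⟨ht0, ht1⟩ := ht
    have htlt1 : t < 1 := lt_of_lt_of_le ht1 (min_le_right _ _)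
    have hlogt : Real.log t ≠ 0 := ne_of_lt (Real.log_neg ht0 htlt1)
    have htne : t ≠ 0 := ne_of_gt ht0
    have hft : f t = t ^ N * g t := by
      rw [hgdef]
      field_simp
    rw [hft, Real.log_mul (pow_ne_zero _ htne) hgt, Real.log_pow, add_div,
      mul_div_assoc, div_self hlogt, mul_one]
  -- limit
  have hloggt : Tendsto (fun t : ℝ => Real.log (g t)) (𝓝[>] (0:ℝ)) (𝓝 (Real.log (c N))) :=
    ((Real.continuousAt_log hcN).tendsto).comp hgtend
  have hinvlog : Tendsto (fun t : ℝ => (Real.log t)⁻¹) (𝓝[>] (0:ℝ)) (𝓝 0) := by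
    have h1 : Tendsto (fun t : ℝ => -Real.log t) (𝓝[>] (0:ℝ)) atTop :=
      tendsto_neg_atBot_atTop.comp Real.tendsto_log_nhdsGT_zero
    have h3 : Tendsto (fun t : ℝ => -(-Real.log t)⁻¹) (𝓝[>] (0:ℝ)) (𝓝 (-0)) :=
      h1.inv_tendsto_atTop.neg
    simpa [inv_neg] using h3
  have hmain : Tendsto (fun t : ℝ => (N:ℝ) + Real.log (g t) / Real.log t)
      (𝓝[>] (0:ℝ)) (𝓝 ((N:ℝ) + 0)) := by
    apply tendsto_const_nhds.add
    have := hloggt.mul hinvlog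
    simpa [div_eq_mul_inv] using this
  rw [add_zero] at hmain
  exact hmain.congr' (heq.mono fun t h => h.symm)
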